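/- arXiv:2601.03947 — 4 statements merged into one kernel-verified Lean document; each statement's English description precedes it below -/
import Mathlib

section
/- The kernel of the reduction homomorphism GL_n(ℤ) → GL_n(ℤ/3ℤ) is torsion free; that is, if A is an integer matrix invertible over ℤ which is congruent to the identity matrix modulo 3 and A^k = I for some k ≥ 1, then A = I. -/
/-!
Reduce to an element of prime order `p`. If `A = 1 + ℓ ^ m • C` with `m ≥ 1` and `A ^ p = 1`, the
geometric sum `g = ∑ i < p, A ^ i` satisfies `g * ℓ ^ m • C = A ^ p - 1 = 0`, so `g * C = 0`.
Now `g ≡ p [mod ℓ]`, and for `p = ℓ` odd even `g ≡ ℓ [mod ℓ ^ 2]`; either way `ℓ ∣ C`. Hence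
`A - 1` is divisible by every power of `ℓ`, which for an integer matrix forces `A = 1`.
-/

open Finset Polynomial

theorem exists_eq_nsmul_of_nsmul_eq_nsmul_of_coprime {M : Type*} [AddCommGroup M] {a b : ℕ}
    (hab : a.Coprime b) {x y : M} (h : b • x = a • y) : ∃ z, x = a • z := by
  obtain ⟨u, v, huv⟩ := Nat.isCoprime_iff_coprime.mpr hab
  refine ⟨u • x + v • y, ?_⟩
  calc x = (u * a + v * b) • x := by rw [huv, one_smul]
    _ = a • (u • x + v • y) := by
      rw [add_smul, mul_smul, mul_smul, natCast_zsmul, natCast_zsmul, h, smul_add, smul_comm v,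
        smul_comm u]

theorem natCast_dvd_geom_sum_one_add_sub {S : Type*} [CommRing S] {ℓ : ℕ} {y : S}
    (hy : (ℓ : S) ∣ y) (p : ℕ) : (ℓ : S) ∣ ∑ i ∈ range p, (1 + y) ^ i - p := by
  have hterm (i : ℕ) : (ℓ : S) ∣ (1 + y) ^ i - 1 := by
    simpa using hy.trans (by simpa using sub_dvd_pow_sub_pow (1 + y) 1 i)
  simpa [Finset.sum_sub_distrib] using Finset.dvd_sum (s := range p) fun i _ => hterm i

section Ring

variable {R : Type*} [Ring R] {ℓ : ℕ}

theorem exists_aeval_eq_nsmul_of_dvd (c : R) {k : ℕ} {P : ℤ[X]} (h : (k : ℤ[X]) ∣ P) :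
    ∃ r : R, aeval c P = k • r := by
  obtain ⟨Q, rfl⟩ := h
  exact ⟨aeval c Q, by simp [nsmul_eq_mul]⟩

theorem aeval_geom_sum_one_add (c : R) (m p : ℕ) :
    aeval c (∑ i ∈ range p, (1 + (ℓ : ℤ[X]) ^ m * X) ^ i) =
      ∑ i ∈ range p, (1 + ℓ ^ m • c) ^ i := by
  simp [nsmul_eq_mul]

theorem exists_eq_nsmul_of_one_add_pow_nsmul_pow_eq_one (hℓ : ℓ.Prime) (hℓ_odd : Odd ℓ)
    (hreg : IsSMulRegular R ℓ) {m p : ℕ} (hm : m ≠ 0) (hp : p.Prime) {c : R}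
    (h : (1 + ℓ ^ m • c) ^ p = 1) : ∃ d, c = ℓ • d := by
  obtain ⟨m, rfl⟩ := Nat.exists_eq_succ_of_ne_zero hm
  have hgc : (∑ i ∈ range p, (1 + ℓ ^ (m + 1) • c) ^ i) * c = 0 := by
    have := geom_sum_mul (1 + ℓ ^ (m + 1) • c) p
    rw [h, sub_self, add_sub_cancel_left, mul_smul_comm] at this
    exact hreg.pow _ (this.trans (smul_zero _).symm)
  -- The congruences for `g` are proved in the commutative ring `ℤ[X]` and evaluated at `c`.
  rw [← aeval_geom_sum_one_add] at hgc
  by_cases hpℓ : p = ℓ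
  · subst hpℓ
    have hG := odd_sq_dvd_geom_sum₂_sub (1 : ℤ[X]) ((p : ℤ[X]) ^ m * X) hℓ_odd
    simp only [one_pow, mul_one, ← mul_assoc, ← pow_succ'] at hG
    obtain ⟨r, hr⟩ :=
      exists_aeval_eq_nsmul_of_dvd c (k := p ^ 2) (Nat.cast_pow (α := ℤ[X]) p 2 ▸ hG)
    rw [map_sub, sub_eq_iff_eq_add, map_natCast] at hr
    refine ⟨-(r * c), ?_⟩
    have : p • (c + p • (r * c)) = 0 := by
      rw [← hgc, hr, add_mul, smul_mul_assoc, pow_two, mul_smul, smul_add, nsmul_eq_mul, add_comm]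
    rw [smul_neg, eq_neg_iff_add_eq_zero]
    exact hreg (this.trans (smul_zero _).symm)
  · have hG := natCast_dvd_geom_sum_one_add_sub (ℓ := ℓ) (y := (ℓ : ℤ[X]) ^ (m + 1) * X)
      ((dvd_pow_self _ m.succ_ne_zero).mul_right _) p
    obtain ⟨r, hr⟩ := exists_aeval_eq_nsmul_of_dvd c hG
    rw [map_sub, sub_eq_iff_eq_add, map_natCast] at hr
    refine exists_eq_nsmul_of_nsmul_eq_nsmul_of_coprime
      ((Nat.coprime_primes hℓ hp).mpr (Ne.symm hpℓ)) (y := -(r * c)) ?_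
    rw [smul_neg, eq_neg_iff_add_eq_zero, ← hgc, hr, add_mul, smul_mul_assoc, nsmul_eq_mul,
      add_comm]

theorem exists_sub_one_eq_pow_nsmul_of_pow_prime_eq_one (hℓ : ℓ.Prime) (hℓ_odd : Odd ℓ)
    (hreg : IsSMulRegular R ℓ) {p : ℕ} (hp : p.Prime) {x : R} (hx : x ^ p = 1)
    (h1 : ∃ c, x - 1 = ℓ • c) : ∀ m, ∃ c, x - 1 = ℓ ^ m • c
  | 0 => ⟨x - 1, by rw [pow_zero, one_smul]⟩
  | m + 1 => by
    obtain ⟨c, hc⟩ := exists_sub_one_eq_pow_nsmul_of_pow_prime_eq_one hℓ hℓ_odd hreg hp hx h1 m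
    rcases eq_or_ne m 0 with rfl | hm
    · simpa using h1
    obtain ⟨d, rfl⟩ := exists_eq_nsmul_of_one_add_pow_nsmul_pow_eq_one hℓ hℓ_odd hreg hm hp
      (c := c) (by rwa [← hc, add_sub_cancel])
    exact ⟨d, by rw [hc, smul_smul, ← pow_succ]⟩

end Ring

theorem Submonoid.eq_one_of_isOfFinOrder {M : Type*} [Monoid M] {S : Submonoid M}
    (hS : ∀ y ∈ S, ∀ p : ℕ, p.Prime → y ^ p = 1 → y = 1) {x : M} (hx : x ∈ S)
    (hfin : IsOfFinOrder x) : x = 1 := by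
  by_contra hne
  have hpos := hfin.orderOf_pos
  have hp := Nat.minFac_prime (mt orderOf_eq_one_iff.mp hne)
  set N := orderOf x
  have hy : x ^ (N / N.minFac) = 1 := by
    refine hS _ (S.pow_mem hx _) _ hp ?_
    rw [← pow_mul, Nat.div_mul_cancel N.minFac_dvd, pow_orderOf_eq_one]
  have hle :=
    Nat.le_of_dvd (Nat.div_pos (Nat.minFac_le hpos) hp.pos) (orderOf_dvd_of_pow_eq_one hy)
  exact (Nat.div_lt_self hpos hp.one_lt).not_ge hle

namespace Matrix

variable {m n : Type*} {ℓ : ℕ}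

theorem exists_eq_nsmul_of_map_intCast_eq_zero {B : Matrix m n ℤ}
    (h : B.map (Int.cast : ℤ → ZMod ℓ) = 0) : ∃ C, B = ℓ • C := by
  have hdvd (i : m) (j : n) : (ℓ : ℤ) ∣ B i j :=
    (ZMod.intCast_zmod_eq_zero_iff_dvd _ _).mp (congrFun (congrFun h i) j)
  exact ⟨Matrix.of fun i j => B i j / ℓ, by ext i j; simp [Int.mul_ediv_cancel' (hdvd i j)]⟩

theorem eq_zero_of_forall_exists_eq_pow_nsmul (hℓ : ℓ ≠ 1) {B : Matrix m n ℤ}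
    (h : ∀ k, ∃ C, B = ℓ ^ k • C) : B = 0 := by
  ext i j
  by_contra hne
  refine (FiniteMultiplicity.not_iff_forall (a := (ℓ : ℤ))).mpr (fun k => ?_)
    (Int.finiteMultiplicity_iff.mpr ⟨by simpa using hℓ, hne⟩)
  obtain ⟨C, hC⟩ := h k
  exact ⟨C i j, by simp [hC]⟩

theorem eq_one_of_pow_eq_one_of_map_intCast_eq_one [Fintype n] [DecidableEq n] (hℓ : ℓ.Prime)
    (hℓ_odd : Odd ℓ) {A : Matrix n n ℤ} (hA : A.map (Int.cast : ℤ → ZMod ℓ) = 1) {k : ℕ}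
    (hk : 0 < k) (hAk : A ^ k = 1) : A = 1 := by
  have hreg : IsSMulRegular (Matrix n n ℤ) ℓ := fun B C hBC =>
    IsSMulRegular.of_ne_zero (M := Matrix n n ℤ) (Int.natCast_ne_zero.mpr hℓ.ne_zero)
      (by simpa only [natCast_zsmul] using hBC)
  refine Submonoid.eq_one_of_isOfFinOrder
    (S := MonoidHom.mker (Int.castRingHom (ZMod ℓ)).mapMatrix) ?_ hA
    (isOfFinOrder_iff_pow_eq_one.mpr ⟨k, hk, hAk⟩)
  intro B hB p hp hBp
  have h1 := exists_eq_nsmul_of_map_intCast_eq_zero (B := B - 1) (ℓ := ℓ)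
    (by rw [MonoidHom.mem_mker] at hB; simp [Matrix.map_sub, ← hB])
  exact sub_eq_zero.mp <| eq_zero_of_forall_exists_eq_pow_nsmul hℓ.ne_one <|
    exists_sub_one_eq_pow_nsmul_of_pow_prime_eq_one hℓ hℓ_odd hreg hp hBp h1

end Matrix

theorem kernel_GL_mod3_torsionFree_general (n : ℕ) (A : Matrix (Fin n) (Fin n) ℤ)
    (hmod : A.map (Int.cast : ℤ → ZMod 3) = 1)
    (k : ℕ) (hk : 1 ≤ k) (hAk : A ^ k = 1) : A = 1 :=
  Matrix.eq_one_of_pow_eq_one_of_map_intCast_eq_one Nat.prime_three ⟨1, rfl⟩ hmod hk hAk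

theorem kernel_GL_mod3_torsionFree (n : ℕ) (A : Matrix (Fin n) (Fin n) ℤ)
    (hA : IsUnit A) (hmod : A.map (Int.cast : ℤ → ZMod 3) = 1)
    (k : ℕ) (hk : 1 ≤ k) (hAk : A ^ k = 1) : A = 1 :=
  kernel_GL_mod3_torsionFree_general n A hmod k hk hAk
end

section
/- Let Φ be an automorphism of ℤ^n whose induced automorphism of (ℤ/3ℤ)^n is the identity. Then every Φ-periodic element of ℤ^n is fixed by Φ: if v ∈ ℤ^n and Φ^k(v) = v for some k ≥ 1, then Φ(v) = v. -/
/-! Put `u = Φ v - v`. Because `Φ ≡ 1 (mod 3)`, applying `Φ - 1` gains a factor of `3`, so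
`u ∈ 3^m ℤⁿ` implies `Φ^j u ≡ u (mod 3^(m+1))`. Periodicity gives
`∑_{j<k} Φ^j u = Φ^k v - v = 0`. If `3 ∤ k` this says `k u ≡ 0 (mod 3^(m+1))`, so `u ∈ 3^(m+1) ℤⁿ`.
If `k = 3`, expanding `u + Φ u + Φ² u = 3u + 3(Φ - 1)u + (Φ - 1)²u` gives `3u ≡ 0 (mod 3^(m+2))`,
and again `u ∈ 3^(m+1) ℤⁿ`. In both cases `u` is divisible by every power of `3`, so `u = 0`
by Krull's intersection theorem. Writing `k = 3^a b` with `3 ∤ b`, the first case makes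
`v` fixed by `Φ^(3^a)`, and `a` applications of the second case make it fixed by `Φ`. -/

open Finset Submodule

namespace Submodule

variable {R M : Type*} [CommRing R] [AddCommGroup M] [Module R M] {N : Submodule R M} {x : M}

theorem mem_of_smul_mem_span_singleton_smul {r : R} (hr : IsSMulRegular M r)
    (hx : r • x ∈ Ideal.span {r} • N) : x ∈ N := by
  rw [ideal_span_singleton_smul, mem_smul_pointwise_iff_exists] at hx
  obtain ⟨y, hy, hyx⟩ := hx
  exact hr hyx ▸ hy

theorem mem_pow_succ_smul_of_smul_mem {I : Ideal R} {r : R} (hr : IsCoprime I (Ideal.span {r}))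
    {m : ℕ} (hx : x ∈ I ^ m • N) (hrx : r • x ∈ I ^ (m + 1) • N) : x ∈ I ^ (m + 1) • N := by
  obtain ⟨i, hi, _, hj, hij⟩ := Ideal.isCoprime_iff_exists.mp hr
  obtain ⟨c, rfl⟩ := Ideal.mem_span_singleton'.mp hj
  have hix : i • x ∈ I ^ (m + 1) • N := by
    rw [pow_succ', Submodule.mul_smul]
    exact smul_mem_smul hi hx
  have hsplit : x = i • x + c • r • x := by rw [smul_smul, ← add_smul, hij, one_smul]
  rw [hsplit]
  exact add_mem hix (smul_mem _ c hrx)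

end Submodule

namespace Module.End

section CommRing

variable {R M : Type*} [CommRing R] [AddCommGroup M] [Module R M]

theorem geom_sum_apply_sub (f : Module.End R M) (k : ℕ) (v : M) :
    (∑ i ∈ range k, f ^ i) (f v - v) = (f ^ k) v - v := by
  simpa using LinearMap.congr_fun (geom_sum_mul f k) v

section

variable (I : Ideal R) {f : Module.End R M}
  (hf : LinearMap.range (f - 1) ≤ I • (⊤ : Submodule R M))
include hf

theorem sub_mem_pow_succ_smul_top {m : ℕ} {x : M} (hx : x ∈ I ^ m • (⊤ : Submodule R M)) :
    f x - x ∈ I ^ (m + 1) • (⊤ : Submodule R M) := by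
  have hmap : (f - 1) x ∈ (I ^ m • (⊤ : Submodule R M)).map (f - 1) := mem_map_of_mem hx
  rw [map_smul'', ← LinearMap.range_eq_map] at hmap
  rw [pow_succ, Submodule.mul_smul]
  exact smul_mono_right _ hf hmap

theorem pow_apply_sub_mem_pow_succ_smul_top (j : ℕ) {m : ℕ} {x : M}
    (hx : x ∈ I ^ m • (⊤ : Submodule R M)) :
    (f ^ j) x - x ∈ I ^ (m + 1) • (⊤ : Submodule R M) := by
  rw [← geom_sum_apply_sub]
  exact smul_top_le_comap_smul_top _ _ (sub_mem_pow_succ_smul_top I hf hx)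

theorem range_pow_sub_one_le (j : ℕ) :
    LinearMap.range (f ^ j - 1) ≤ I • (⊤ : Submodule R M) := by
  rintro _ ⟨x, rfl⟩
  simpa using pow_apply_sub_mem_pow_succ_smul_top I hf j (m := 0) (x := x) (by simp)

theorem sub_mem_iInf_pow_smul_top_of_isCoprime {k : ℕ}
    (hk : IsCoprime I (Ideal.span {(k : R)})) {v : M} (hv : (f ^ k) v = v) :
    f v - v ∈ ⨅ m : ℕ, I ^ m • (⊤ : Submodule R M) := by
  have horbit : ∑ j ∈ range k, (f ^ j) (f v - v) = 0 := by
    rw [← LinearMap.sum_apply, geom_sum_apply_sub, hv, sub_self]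
  rw [mem_iInf]
  intro m
  induction m with
  | zero => simp
  | succ m ih =>
    refine mem_pow_succ_smul_of_smul_mem hk ih ?_
    have hsum : (k : R) • (f v - v) = -∑ j ∈ range k, ((f ^ j) (f v - v) - (f v - v)) := by
      rw [sum_sub_distrib, horbit, sum_const, card_range, Nat.cast_smul_eq_nsmul, zero_sub,
        neg_neg]
    rw [hsum]
    exact neg_mem (sum_mem fun j _ => pow_apply_sub_mem_pow_succ_smul_top I hf j ih)

end

theorem sub_mem_iInf_pow_smul_top_of_pow_three_apply_eq (h3 : IsSMulRegular M (3 : R))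
    {f : Module.End R M}
    (hf : LinearMap.range (f - 1) ≤ Ideal.span {(3 : R)} • (⊤ : Submodule R M))
    {v : M} (hv : (f ^ 3) v = v) :
    f v - v ∈ ⨅ m : ℕ, Ideal.span {(3 : R)} ^ m • (⊤ : Submodule R M) := by
  set I := Ideal.span {(3 : R)}
  set u := f v - v
  set w := f u - u
  have horbit : (3 : R) • u = -((3 : R) • w + (f w - w)) := by
    have h := geom_sum_apply_sub f 3 v
    rw [hv, sub_self, sum_range_succ, sum_range_succ, sum_range_one] at h
    simp only [LinearMap.add_apply, pow_zero, pow_one, sq, Module.End.mul_apply,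
      Module.End.one_apply] at h
    simp only [w, map_sub]
    linear_combination (norm := module) h
  rw [mem_iInf]
  intro m
  induction m with
  | zero => simp
  | succ m ih =>
    have hw : w ∈ I ^ (m + 1) • (⊤ : Submodule R M) := sub_mem_pow_succ_smul_top I hf ih
    have h3w : (3 : R) • w ∈ I ^ (m + 2) • (⊤ : Submodule R M) := by
      rw [pow_succ', Submodule.mul_smul]
      exact smul_mem_smul (Ideal.mem_span_singleton_self 3) hw
    have h3u : (3 : R) • u ∈ I • I ^ (m + 1) • (⊤ : Submodule R M) := by
      rw [← Submodule.mul_smul, ← pow_succ', horbit]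
      exact neg_mem (add_mem h3w (sub_mem_pow_succ_smul_top I hf hw))
    exact mem_of_smul_mem_span_singleton_smul h3 h3u

end CommRing

section Int

variable {M : Type*} [AddCommGroup M] [Module.Finite ℤ M] [Module.IsTorsionFree ℤ M]

theorem eq_of_sub_mem_iInf_pow_span_three_smul_top {x y : M}
    (h : x - y ∈ ⨅ m : ℕ, Ideal.span {(3 : ℤ)} ^ m • (⊤ : Submodule ℤ M)) : x = y := by
  have hne : Ideal.span {(3 : ℤ)} ≠ ⊤ := by
    rw [Ne, Ideal.span_singleton_eq_top]
    decide
  rw [← sub_eq_zero, ← mem_bot ℤ]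
  exact (Ideal.iInf_pow_smul_eq_bot_of_isTorsionFree _ hne).le h

variable {f : Module.End ℤ M}
  (hf : LinearMap.range (f - 1) ≤ Ideal.span {(3 : ℤ)} • (⊤ : Submodule ℤ M))
include hf

theorem apply_eq_of_pow_three_pow_apply_eq {v : M} (a : ℕ) (hv : (f ^ 3 ^ a) v = v) :
    f v = v := by
  induction a with
  | zero => simpa using hv
  | succ a ih =>
    rw [pow_succ, pow_mul] at hv
    exact ih (eq_of_sub_mem_iInf_pow_span_three_smul_top
      (sub_mem_iInf_pow_smul_top_of_pow_three_apply_eq (IsSMulRegular.of_ne_zero three_ne_zero)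
        (range_pow_sub_one_le _ hf _) hv))

theorem apply_eq_of_pow_apply_eq {k : ℕ} (hk : k ≠ 0) {v : M} (hv : (f ^ k) v = v) :
    f v = v := by
  obtain ⟨a, b, hb, rfl⟩ := Nat.exists_eq_pow_mul_and_not_dvd hk 3 (by norm_num)
  have hcop : IsCoprime (Ideal.span {(3 : ℤ)}) (Ideal.span {((b : ℕ) : ℤ)}) := by
    rw [Ideal.isCoprime_span_singleton_iff, Int.prime_three.coprime_iff_not_dvd]
    exact_mod_cast hb
  rw [pow_mul] at hv
  exact apply_eq_of_pow_three_pow_apply_eq hf a (eq_of_sub_mem_iInf_pow_span_three_smul_top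
    (sub_mem_iInf_pow_smul_top_of_isCoprime _ (range_pow_sub_one_le _ hf _) hcop hv))

end Int

end Module.End

theorem periodic_fixed_of_trivial_mod3 (n : ℕ) (Φ : (Fin n → ℤ) ≃ₗ[ℤ] (Fin n → ℤ))
    (hmod : ∀ (v : Fin n → ℤ) (i : Fin n), ((Φ v i : ℤ) : ZMod 3) = ((v i : ℤ) : ZMod 3))
    (v : Fin n → ℤ) (k : ℕ) (hk : 1 ≤ k) (hper : (Φ ^ k) v = v) : Φ v = v := by
  have hf : LinearMap.range ((Φ : Module.End ℤ (Fin n → ℤ)) - 1) ≤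
      Ideal.span {(3 : ℤ)} • (⊤ : Submodule ℤ (Fin n → ℤ)) := by
    rintro _ ⟨x, rfl⟩
    have h3 (i : Fin n) : (3 : ℤ) ∣ Φ x i - x i := by
      exact_mod_cast (ZMod.intCast_eq_intCast_iff_dvd_sub _ _ 3).mp (hmod x i).symm
    choose c hc using h3
    rw [ideal_span_singleton_smul, mem_smul_pointwise_iff_exists]
    exact ⟨c, trivial, funext fun i => (hc i).symm⟩
  refine Module.End.apply_eq_of_pow_apply_eq hf (by omega : k ≠ 0) ?_
  simpa [Module.End.pow_apply, LinearEquiv.pow_apply] using hper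
end

section
/- In a free group F, no nontrivial element is conjugate to its own inverse: if g ∈ F, g ≠ 1, then there is no h ∈ F with h g h⁻¹ = g⁻¹. -/
/-!
If `h * g * h⁻¹ = g⁻¹` then `(h * g) ^ 2 = h ^ 2`, and free groups have unique roots, so
`h * g = h`. Mathlib's `IsMulTorsionFree` asks for injectivity of `a ↦ a ^ n`, which for
non-abelian groups is stronger than having no torsion (the Klein bottle group is torsion-free
but `b * a * b⁻¹ = a⁻¹` there).
-/

theorem eq_one_of_mul_mul_inv_eq_inv {G : Type*} [Group G] [IsMulTorsionFree G] {g h : G}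
    (hconj : h * g * h⁻¹ = g⁻¹) : g = 1 := by
  have hsq : (h * g) ^ 2 = h ^ 2 :=
    calc (h * g) ^ 2 = h * g * (h * g * h⁻¹) * h := by rw [pow_two]; group
      _ = h ^ 2 := by rw [hconj, mul_inv_cancel_right, pow_two]
  exact mul_eq_left.1 (IsMulTorsionFree.pow_left_injective two_ne_zero hsq)

theorem freeGroup_not_conjugate_inverse (α : Type*) (g : FreeGroup α) (hg : g ≠ 1) :
    ¬ ∃ h : FreeGroup α, h * g * h⁻¹ = g⁻¹ := by
  rintro ⟨h, hconj⟩
  exact hg (eq_one_of_mul_mul_inv_eq_inv hconj)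
end

section
/- If A ∈ GL_n(ℤ) has finite order and induces the identity on (ℤ/3ℤ)^n = ℤ^n ⊗ ℤ/3ℤ, and V ≤ ℤ^n is an A-invariant subgroup on which A acts as the identity with ℤ^n/V torsion-free, then A acts as the identity on ℤ^n/V. -/
open Finset

namespace Mod3Minkowski

/-- `q n s D` : every entry of every value of `D` is divisible by `3^s`. -/
def q (n : ℕ) (s : ℕ) (D : Module.End ℤ (Fin n → ℤ)) : Prop :=
  ∀ x i, (3:ℤ)^s ∣ D x i

lemma extract {n s} {D : Module.End ℤ (Fin n → ℤ)} (h : q n s D) (x : Fin n → ℤ) :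
    ∃ y, D x = ((3:ℤ)^s) • y := by
  refine ⟨fun i => D x i / 3^s, funext fun i => ?_⟩
  simp only [Pi.smul_apply, smul_eq_mul]
  exact (Int.mul_ediv_cancel' (h x i)).symm

lemma q_mono {n s t} {D : Module.End ℤ (Fin n → ℤ)} (h : q n t D) (hst : s ≤ t) :
    q n s D :=
  fun x i => (pow_dvd_pow 3 hst).trans (h x i)

lemma q_zero {n} (D : Module.End ℤ (Fin n → ℤ)) : q n 0 D := by
  intro x i; simp

lemma q_left {n t} {D : Module.End ℤ (Fin n → ℤ)} (C : Module.End ℤ (Fin n → ℤ))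
    (h : q n t D) : q n t (C * D) := by
  intro x i
  obtain ⟨y, hy⟩ := extract h x
  have hcd : (C * D) x = ((3:ℤ)^t) • C y := by
    rw [Module.End.mul_apply, hy, map_smul]
  rw [hcd, Pi.smul_apply, smul_eq_mul]
  exact dvd_mul_right _ _

lemma q_mul {n s t} {D C : Module.End ℤ (Fin n → ℤ)}
    (hD : q n s D) (hC : q n t C) : q n (s + t) (D * C) := by
  intro x i
  obtain ⟨y, hy⟩ := extract hC x
  have hcd : (D * C) x = ((3:ℤ)^t) • D y := by
    rw [Module.End.mul_apply, hy, map_smul]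
  rw [hcd, Pi.smul_apply, smul_eq_mul, pow_add, mul_comm ((3:ℤ)^s)]
  exact mul_dvd_mul_left _ (hD y i)

lemma q_pow {n s} {D : Module.End ℤ (Fin n → ℤ)} (h : q n s D) :
    ∀ j, q n (j * s) (D ^ j) := by
  intro j
  induction j with
  | zero => intro x i; simp
  | succ m ih =>
      have := q_mul ih h
      rw [pow_succ]
      simpa [Nat.succ_mul] using this

lemma q_add {n t} {D C : Module.End ℤ (Fin n → ℤ)}
    (hD : q n t D) (hC : q n t C) : q n t (D + C) := by
  intro x i
  simpa using dvd_add (hD x i) (hC x i)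

lemma q_neg {n t} {D : Module.End ℤ (Fin n → ℤ)} (hD : q n t D) : q n t (-D) := by
  intro x i
  simpa using (hD x i).neg_right

lemma q_sum {n t} {ι : Type*} (T : Finset ι) (f : ι → Module.End ℤ (Fin n → ℤ))
    (h : ∀ m ∈ T, q n t (f m)) : q n t (∑ m ∈ T, f m) := by
  intro x i
  have hsum : (∑ m ∈ T, f m) x i = ∑ m ∈ T, f m x i := by
    rw [LinearMap.sum_apply]
    simp
  rw [hsum]
  exact Finset.dvd_sum fun m hm => h m hm x i

lemma natCast_apply {n} (c : ℕ) (x : Fin n → ℤ) :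
    ((c : Module.End ℤ (Fin n → ℤ))) x = (c:ℤ) • x := by simp

lemma entry_mul_natCast {n} (D : Module.End ℤ (Fin n → ℤ)) (c : ℕ) (x : Fin n → ℤ)
    (i : Fin n) : (D * (c : Module.End ℤ (Fin n → ℤ))) x i = (c : ℤ) * D x i := by
  rw [Module.End.mul_apply, natCast_apply, map_smul, Pi.smul_apply, smul_eq_mul]

lemma q_mul_natCast {n t} {D : Module.End ℤ (Fin n → ℤ)} (h : q n t D) (c : ℕ) :
    q n t (D * (c : Module.End ℤ (Fin n → ℤ))) := by
  intro x i
  rw [entry_mul_natCast]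
  exact (h x i).mul_left _

/-- If entries are divisible by arbitrarily high powers of 3, the map is zero. -/
lemma zero_of_all_q {n} {D : Module.End ℤ (Fin n → ℤ)} (h : ∀ s, q n s D) : D = 0 := by
  apply LinearMap.ext
  intro x
  funext i
  show D x i = 0
  by_contra ha
  set a := D x i with hax
  have h1 : (3:ℤ) ^ a.natAbs ∣ |a| := (dvd_abs _ _).mpr (h a.natAbs x i)
  have h2 : (3:ℤ) ^ a.natAbs ≤ |a| := Int.le_of_dvd (abs_pos.mpr ha) h1
  have h3 : (a.natAbs : ℤ) < (3:ℤ) ^ a.natAbs := by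
    have := Nat.lt_pow_self (n := a.natAbs) (by norm_num : 1 < 3)
    exact_mod_cast this
  rw [Int.abs_eq_natAbs] at h2
  omega

/-- The key inductive step when `3 ∤ k`. -/
lemma step_coprime {n s k} {D : Module.End ℤ (Fin n → ℤ)} (hs : 1 ≤ s)
    (hk : ¬ (3 ∣ k)) (hq : q n s D) (h1 : (1 + D) ^ k = 1) : q n (s + 1) D := by
  have hk1 : 1 ≤ k := by
    rcases Nat.eq_zero_or_pos k with h | h
    · exact absurd (h ▸ dvd_zero 3) hk
    · exact h
  have hC : Commute D (1 : Module.End ℤ (Fin n → ℤ)) := Commute.one_right D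
  have hexp := hC.add_pow k
  rw [add_comm D 1] at hexp
  rw [h1] at hexp
  rw [Finset.range_eq_Ico, Finset.sum_eq_sum_Ico_succ_bot (by omega),
    Finset.sum_eq_sum_Ico_succ_bot (by omega)] at hexp
  set S := ∑ m ∈ Finset.Ico 2 (k + 1),
      D ^ m * 1 ^ (k - m) * ((k.choose m : ℕ) : Module.End ℤ (Fin n → ℤ)) with hS
  simp only [zero_add, pow_zero, pow_one, one_mul, one_pow, mul_one, Nat.sub_zero,
    Nat.choose_zero_right, Nat.choose_one_right, Nat.cast_one] at hexp
  -- hexp : 1 = 1 + (D * ↑k + S)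
  have h0 : D * (k : Module.End ℤ (Fin n → ℤ)) + S = 0 := left_eq_add.mp hexp
  have hkey : D * (k : Module.End ℤ (Fin n → ℤ)) = -S := eq_neg_of_add_eq_zero_left h0
  have hqS : q n (2 * s) S := by
    rw [hS]
    apply q_sum
    intro m hm
    simp only [Finset.mem_Ico] at hm
    have hm2 : 2 ≤ m := hm.1
    have hx : q n (2 * s) (D ^ m * 1 ^ (k - m)) := by
      rw [one_pow, mul_one]
      exact q_mono (q_pow hq m) (Nat.mul_le_mul_right s hm2)
    exact q_mul_natCast hx (k.choose m)
  have hqDk : q n (2 * s) (D * (k : Module.End ℤ (Fin n → ℤ))) := by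
    rw [hkey]; exact q_neg hqS
  have hnat : Nat.Coprime 3 k := (Nat.Prime.coprime_iff_not_dvd (by norm_num)).mpr hk
  have hcop3 : IsCoprime (3:ℤ) (k:ℤ) := by
    rw [Int.isCoprime_iff_gcd_eq_one]
    simpa [Int.gcd] using hnat
  have hcop : IsCoprime ((3:ℤ) ^ (2 * s)) (k:ℤ) := hcop3.pow_left
  intro x i
  have hd : (3:ℤ) ^ (2 * s) ∣ D x i * (k:ℤ) := by
    have := hqDk x i
    rwa [entry_mul_natCast, mul_comm ((k:ℤ)) (D x i)] at this
  have hdd : (3:ℤ) ^ (2 * s) ∣ D x i := hcop.dvd_of_dvd_mul_right hd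
  exact (pow_dvd_pow 3 (by omega)).trans hdd

/-- The key inductive step for cubes. -/
lemma step_three {n s} {D : Module.End ℤ (Fin n → ℤ)} (hs : 1 ≤ s)
    (hq : q n s D) (h1 : (1 + D) ^ 3 = 1) : q n (s + 1) D := by
  have hexp : (1 + D) ^ 3 =
      1 + (D * (3 : Module.End ℤ (Fin n → ℤ)) +
        (D ^ 2 * (3 : Module.End ℤ (Fin n → ℤ)) + D ^ 3)) := by
    noncomm_ring
  have h0 : D * (3 : Module.End ℤ (Fin n → ℤ)) +
      (D ^ 2 * (3 : Module.End ℤ (Fin n → ℤ)) + D ^ 3) = 0 :=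
    left_eq_add.mp (hexp.symm.trans h1).symm
  have hkey : D * (3 : Module.End ℤ (Fin n → ℤ)) =
      -(D ^ 2 * (3 : Module.End ℤ (Fin n → ℤ)) + D ^ 3) :=
    eq_neg_of_add_eq_zero_left h0
  intro x i
  have h3cast : ((3:ℕ) : Module.End ℤ (Fin n → ℤ)) = 3 := by norm_num
  have hD2 : (3:ℤ) ^ (s + 2) ∣ (D ^ 2 * (3 : Module.End ℤ (Fin n → ℤ))) x i := by
    have hq2 : (3:ℤ) ^ (2 * s) ∣ (D ^ 2) x i := q_pow hq 2 x i
    have he : (D ^ 2 * (3 : Module.End ℤ (Fin n → ℤ))) x i = (3:ℤ) * (D ^ 2) x i := by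
      rw [← h3cast, entry_mul_natCast]; norm_num
    rw [he, show (3:ℤ) ^ (s + 2) = 3 * (3:ℤ) ^ (s + 1) by ring]
    exact mul_dvd_mul_left 3 ((pow_dvd_pow 3 (by omega : s + 1 ≤ 2 * s)).trans hq2)
  have hD3 : (3:ℤ) ^ (s + 2) ∣ (D ^ 3) x i := by
    have hq3 : (3:ℤ) ^ (3 * s) ∣ (D ^ 3) x i := q_pow hq 3 x i
    exact (pow_dvd_pow 3 (by omega : s + 2 ≤ 3 * s)).trans hq3
  have hsum : (3:ℤ) ^ (s + 2) ∣ (D * (3 : Module.End ℤ (Fin n → ℤ))) x i := by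
    rw [hkey]
    simp only [LinearMap.neg_apply, Pi.neg_apply, LinearMap.add_apply, Pi.add_apply]
    exact (dvd_add hD2 hD3).neg_right
  have h3mul : (D * (3 : Module.End ℤ (Fin n → ℤ))) x i = 3 * D x i := by
    rw [← h3cast, entry_mul_natCast]; norm_num
  rw [h3mul, show (3:ℤ) ^ (s + 2) = 3 * (3:ℤ) ^ (s + 1) by ring] at hsum
  exact (mul_dvd_mul_iff_left (by norm_num : (3:ℤ) ≠ 0)).mp hsum

lemma all_q_of_step {n} {D : Module.End ℤ (Fin n → ℤ)} (h1 : q n 1 D)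
    (hstep : ∀ s, 1 ≤ s → q n s D → q n (s + 1) D) : ∀ s, q n s D := by
  intro s
  induction s with
  | zero => exact q_zero D
  | succ m ih =>
      rcases Nat.eq_zero_or_pos m with h | h
      · subst h; exact h1
      · exact hstep m h ih

lemma q_pow_sub_one {n} {E : Module.End ℤ (Fin n → ℤ)} (h : q n 1 (E - 1)) :
    ∀ j, q n 1 (E ^ j - 1) := by
  intro j
  induction j with
  | zero => intro x i; simp
  | succ m ih =>
      have hrw : E ^ (m + 1) - 1 = E ^ m * (E - 1) + (E ^ m - 1) := by
        rw [pow_succ]; noncomm_ring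
      rw [hrw]
      exact q_add (q_left _ h) ih

lemma eq_one_of_cube {n} {F : Module.End ℤ (Fin n → ℤ)} (hF : F ^ 3 = 1)
    (hq : q n 1 (F - 1)) : F = 1 := by
  set D := F - 1 with hD
  have h1 : (1 + D) ^ 3 = 1 := by
    rw [hD]; simpa using hF
  have hall : ∀ s, q n s D :=
    all_q_of_step hq (fun s hs hqs => step_three hs hqs h1)
  exact sub_eq_zero.mp (zero_of_all_q hall)

lemma eq_one_of_finite_order {n} :
    ∀ k, 1 ≤ k → ∀ E : Module.End ℤ (Fin n → ℤ), E ^ k = 1 → q n 1 (E - 1) → E = 1 := by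
  intro k
  induction k using Nat.strong_induction_on with
  | _ k IH =>
    intro hk E hE hq
    by_cases h3 : 3 ∣ k
    · obtain ⟨k', rfl⟩ := h3
      have hk' : 1 ≤ k' := by omega
      have hF3 : (E ^ k') ^ 3 = 1 := by
        rw [← pow_mul, mul_comm]; exact hE
      have hqF : q n 1 (E ^ k' - 1) := q_pow_sub_one hq k'
      have hFone : E ^ k' = 1 := eq_one_of_cube hF3 hqF
      exact IH k' (by omega) hk' E hFone hq
    · set D := E - 1 with hD
      have h1 : (1 + D) ^ k = 1 := by
        rw [hD]; simpa using hE
      have hall : ∀ s, q n s D :=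
        all_q_of_step hq (fun s hs hqs => step_coprime hs h3 hqs h1)
      exact sub_eq_zero.mp (zero_of_all_q hall)

end Mod3Minkowski

theorem finite_order_trivial_mod3_acts_trivially_on_torsionFree_quotient
    (n : ℕ) (A : (Fin n → ℤ) ≃ₗ[ℤ] (Fin n → ℤ))
    (hfin : ∃ k : ℕ, 1 ≤ k ∧ A ^ k = 1)
    (hmod : ∀ (v : Fin n → ℤ) (i : Fin n), ((A v i : ℤ) : ZMod 3) = ((v i : ℤ) : ZMod 3))
    (V : Submodule ℤ (Fin n → ℤ))
    (hinv : ∀ v ∈ V, A v ∈ V) (hid : ∀ v ∈ V, A v = v)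
    (htf : ∀ (x : (Fin n → ℤ) ⧸ V) (k : ℕ), 1 ≤ k → k • x = 0 → x = 0) :
    ∀ x : Fin n → ℤ, A x - x ∈ V := by
  obtain ⟨k, hk1, hAk⟩ := hfin
  set E : Module.End ℤ (Fin n → ℤ) := A.toLinearMap with hEdef
  have hpow : ∀ j x, (E ^ j) x = (A ^ j) x := by
    intro j
    induction j with
    | zero => intro x; simp
    | succ m ih =>
        intro x
        rw [pow_succ, pow_succ]
        rw [Module.End.mul_apply, ih]
        rfl
  have hEk : E ^ k = 1 := by
    apply LinearMap.ext
    intro x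
    rw [hpow k x, hAk]
    rfl
  have hq1 : Mod3Minkowski.q n 1 (E - 1) := by
    intro x i
    have h := hmod x i
    have hz : ((A x i - x i : ℤ) : ZMod 3) = 0 := by
      push_cast
      rw [h]; ring
    have hdvd : (3:ℤ) ∣ A x i - x i := by
      have := (ZMod.intCast_zmod_eq_zero_iff_dvd (A x i - x i) 3).mp hz
      exact_mod_cast this
    simpa [hEdef] using hdvd
  have hE1 : E = 1 := Mod3Minkowski.eq_one_of_finite_order k hk1 E hEk hq1
  intro x
  have hAx : A x = x := by
    have := congrArg (fun f => f x) (congrArg DFunLike.coe hE1)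
    simpa [hEdef] using this
  rw [hAx]
  simp
end
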